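/- Let F : ℝⁿ → ℝᵐ satisfy the local tangential cone condition with constant η ∈ [0, 1/2), and suppose x⋆ ∈ ℝⁿ satisfies F(x⋆) = 0. Let δ ∈ (0, 2(1−η)) and let (x_k)_{k≥0} be generated from an initial vector x₀ by x_{k+1} = x_k − δ (‖F_{I_k}(x_k)‖₂² / ‖(F'_{I_k}(x_k))ᵀ F_{I_k}(x_k)‖₂²) (F'_{I_k}(x_k))ᵀ F_{I_k}(x_k), where each I_k ⊆ {1,…,m} is a nonempty index subset such that F'_{I_k}(x_k) has full column rank and (F'_{I_k}(x_k))ᵀ F_{I_k}(x_k) ≠ 0. If there exists κ̄ > 0 such that κ(F'_{I_k}(x_k)) ≤ κ̄ for all k ≥ 0, then ‖x_k − x⋆‖₂² ≤ (1 − (2(1−η)δ − δ²) / ((1+η²) κ̄²))^k ‖x₀ − x⋆‖₂² for all k ≥ 0; in particular x_k converges to x⋆. -/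

import Mathlib

open Matrix

/-- The singular values of a real matrix `A`: square roots of the eigenvalues of `AᵀA`. -/
noncomputable def singVals {m' : Type*} [Fintype m'] {n : ℕ}
    (A : Matrix m' (Fin n) ℝ) : Fin n → ℝ :=
  fun j => Real.sqrt ((Matrix.isHermitian_conjTranspose_mul_self A).eigenvalues j)

/-- The largest singular value of `A`. -/
noncomputable def sigmaMax {m' : Type*} [Fintype m'] {n : ℕ}
    (A : Matrix m' (Fin n) ℝ) : ℝ :=
  ⨆ j, singVals A j

/-- The smallest singular value of `A`. -/
noncomputable def sigmaMin {m' : Type*} [Fintype m'] {n : ℕ}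
    (A : Matrix m' (Fin n) ℝ) : ℝ :=
  ⨅ j, singVals A j

/-- The condition number `κ(A) = σ_max(A) / σ_min(A)`. -/
noncomputable def kappa {m' : Type*} [Fintype m'] {n : ℕ}
    (A : Matrix m' (Fin n) ℝ) : ℝ :=
  sigmaMax A / sigmaMin A

/-!
With `e = x_k - x⋆`, `f = F_{I_k}(x_k)`, `J = F'_{I_k}(x_k)` and `g = Jᵀ f`, the cone condition
between `x_k` and `x⋆` says that `J e` is a relative `η`-perturbation of `f`. Writing
`E = ⟨f, J e - f⟩`, this gives `|E| ≤ η ‖f‖²`, `⟨e, g⟩ = ‖f‖² + E` and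
`‖J e‖² ≤ (1 + η²) ‖f‖² + 2 E`. Together with `‖g‖² ≤ σ_max² ‖f‖²`, `σ_min² ‖e‖² ≤ ‖J e‖²` and
`σ_max ≤ κ̄ σ_min`, the expansion of `‖e - c g‖²` shows that every step contracts `‖e‖²` by the
factor `1 - ρ` of the statement, and `0 < ρ ≤ 1` because `κ̄ ≥ κ(J) ≥ 1`.
-/

open RealInnerProductSpace

section DotProduct

variable {ι : Type*} [Fintype ι]

theorem dotProduct_self_nonneg (v : ι → ℝ) : 0 ≤ v ⬝ᵥ v :=
  Finset.sum_nonneg fun i _ => mul_self_nonneg (v i)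

theorem dotProduct_sq_le_dotProduct_self_mul_dotProduct_self (u w : ι → ℝ) :
    (u ⬝ᵥ w) ^ 2 ≤ (u ⬝ᵥ u) * (w ⬝ᵥ w) := by
  simpa only [dotProduct, sq] using Finset.sum_mul_sq_le_sq_mul_sq Finset.univ u w

end DotProduct

namespace Matrix.IsHermitian

section RCLike

variable {𝕜 ι : Type*} [RCLike 𝕜] [Fintype ι] [DecidableEq ι] {B : Matrix ι ι 𝕜}

theorem eigenvectorBasis_repr_mulVec (hB : B.IsHermitian) (v : ι → 𝕜) (j : ι) :
    hB.eigenvectorBasis.repr (WithLp.toLp 2 (B *ᵥ v)) j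
      = hB.eigenvalues j * hB.eigenvectorBasis.repr (WithLp.toLp 2 v) j := by
  have hsymm := isSymmetric_toEuclideanLin_iff.mpr hB (hB.eigenvectorBasis j) (WithLp.toLp 2 v)
  simp only [toLpLin_apply, hB.mulVec_eigenvectorBasis] at hsymm
  rw [OrthonormalBasis.repr_apply_apply, OrthonormalBasis.repr_apply_apply, ← hsymm,
    WithLp.toLp_smul, WithLp.toLp_ofLp, RCLike.real_smul_eq_coe_smul (K := 𝕜), inner_smul_left,
    RCLike.conj_ofReal]

end RCLike

section Real

variable {ι : Type*} [Fintype ι] [DecidableEq ι] {B : Matrix ι ι ℝ} (hB : B.IsHermitian)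

theorem sum_sq_eigenvectorBasis_repr (v : ι → ℝ) :
    ∑ j, hB.eigenvectorBasis.repr (WithLp.toLp 2 v) j ^ 2 = v ⬝ᵥ v := by
  simpa [OrthonormalBasis.repr_apply_apply, EuclideanSpace.norm_sq_eq, dotProduct, ← sq] using
    hB.eigenvectorBasis.sum_sq_norm_inner_right (WithLp.toLp 2 v)

theorem dotProduct_mulVec_eq_sum_eigenvalues_mul_sq (v : ι → ℝ) :
    v ⬝ᵥ B *ᵥ v
      = ∑ j, hB.eigenvalues j * hB.eigenvectorBasis.repr (WithLp.toLp 2 v) j ^ 2 := by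
  set u := hB.eigenvectorBasis
  calc v ⬝ᵥ B *ᵥ v = ⟪WithLp.toLp 2 v, WithLp.toLp 2 (B *ᵥ v)⟫ := by
        rw [EuclideanSpace.inner_toLp_toLp, star_trivial, dotProduct_comm]
    _ = ⟪u.repr (WithLp.toLp 2 v), u.repr (WithLp.toLp 2 (B *ᵥ v))⟫ :=
        (u.repr.inner_map_map _ _).symm
    _ = _ := by
        simp only [PiLp.inner_apply, u, eigenvectorBasis_repr_mulVec, RCLike.inner_apply,
          conj_trivial, RCLike.ofReal_real_eq_id, id_eq]
        exact Finset.sum_congr rfl fun j _ => by ring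

theorem mul_dotProduct_self_le_dotProduct_mulVec {c : ℝ} (hc : ∀ j, c ≤ hB.eigenvalues j)
    (v : ι → ℝ) : c * (v ⬝ᵥ v) ≤ v ⬝ᵥ B *ᵥ v := by
  rw [← hB.sum_sq_eigenvectorBasis_repr, hB.dotProduct_mulVec_eq_sum_eigenvalues_mul_sq,
    Finset.mul_sum]
  gcongr with j
  exact hc j

theorem dotProduct_mulVec_le_mul_dotProduct_self {c : ℝ} (hc : ∀ j, hB.eigenvalues j ≤ c)
    (v : ι → ℝ) : v ⬝ᵥ B *ᵥ v ≤ c * (v ⬝ᵥ v) := by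
  rw [← hB.sum_sq_eigenvectorBasis_repr, hB.dotProduct_mulVec_eq_sum_eigenvalues_mul_sq,
    Finset.mul_sum]
  gcongr with j
  exact hc j

end Real

end Matrix.IsHermitian

theorem EuclideanSpace.pos_of_ne_zero {n : ℕ} {v : EuclideanSpace ℝ (Fin n)} (hv : v ≠ 0) :
    0 < n :=
  Nat.pos_of_ne_zero fun h => hv (by subst h; exact Subsingleton.elim _ _)

section SingularValues

variable {ι : Type*} [Fintype ι] {n : ℕ} (A : Matrix ι (Fin n) ℝ)

theorem Matrix.mulVec_dotProduct_mulVec_self (v : Fin n → ℝ) :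
    A *ᵥ v ⬝ᵥ A *ᵥ v = v ⬝ᵥ (Aᴴ * A) *ᵥ v := by
  rw [← mulVec_mulVec, dotProduct_mulVec, conjTranspose_eq_transpose_of_trivial, mulVec_transpose,
    dotProduct_comm]

theorem sigmaMin_nonneg : 0 ≤ sigmaMin A :=
  Real.iInf_nonneg fun _ => Real.sqrt_nonneg _

theorem sigmaMin_sq_le_eigenvalues (j : Fin n) :
    sigmaMin A ^ 2 ≤ (isHermitian_conjTranspose_mul_self A).eigenvalues j := by
  have hle : sigmaMin A ≤ singVals A j := ciInf_le (Finite.bddBelow_range _) j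
  calc sigmaMin A ^ 2 ≤ singVals A j ^ 2 := by gcongr; exact sigmaMin_nonneg A
    _ = _ := Real.sq_sqrt (eigenvalues_conjTranspose_mul_self_nonneg A j)

theorem eigenvalues_le_sigmaMax_sq (j : Fin n) :
    (isHermitian_conjTranspose_mul_self A).eigenvalues j ≤ sigmaMax A ^ 2 := by
  have hle : singVals A j ≤ sigmaMax A := le_ciSup (Finite.bddAbove_range _) j
  calc _ = singVals A j ^ 2 := (Real.sq_sqrt (eigenvalues_conjTranspose_mul_self_nonneg A j)).symm
    _ ≤ sigmaMax A ^ 2 := by gcongr; exact Real.sqrt_nonneg _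

theorem sigmaMin_sq_mul_le_mulVec_dotProduct_mulVec (v : Fin n → ℝ) :
    sigmaMin A ^ 2 * (v ⬝ᵥ v) ≤ A *ᵥ v ⬝ᵥ A *ᵥ v := by
  rw [mulVec_dotProduct_mulVec_self]
  exact (isHermitian_conjTranspose_mul_self A).mul_dotProduct_self_le_dotProduct_mulVec
    (sigmaMin_sq_le_eigenvalues A) v

theorem mulVec_dotProduct_mulVec_le_sigmaMax_sq_mul (v : Fin n → ℝ) :
    A *ᵥ v ⬝ᵥ A *ᵥ v ≤ sigmaMax A ^ 2 * (v ⬝ᵥ v) := by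
  rw [mulVec_dotProduct_mulVec_self]
  exact (isHermitian_conjTranspose_mul_self A).dotProduct_mulVec_le_mul_dotProduct_self
    (eigenvalues_le_sigmaMax_sq A) v

theorem transpose_mulVec_dotProduct_mulVec_le_sigmaMax_sq_mul (w : ι → ℝ) :
    Aᵀ *ᵥ w ⬝ᵥ Aᵀ *ᵥ w ≤ sigmaMax A ^ 2 * (w ⬝ᵥ w) := by
  set t := Aᵀ *ᵥ w ⬝ᵥ Aᵀ *ᵥ w
  have ht : t = A *ᵥ (Aᵀ *ᵥ w) ⬝ᵥ w := by
    rw [dotProduct_comm, dotProduct_mulVec, ← mulVec_transpose]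
  have hcs : t * t ≤ t * (sigmaMax A ^ 2 * (w ⬝ᵥ w)) := by
    calc t * t = (A *ᵥ (Aᵀ *ᵥ w) ⬝ᵥ w) ^ 2 := by rw [← ht, sq]
      _ ≤ (A *ᵥ (Aᵀ *ᵥ w) ⬝ᵥ A *ᵥ (Aᵀ *ᵥ w)) * (w ⬝ᵥ w) :=
        dotProduct_sq_le_dotProduct_self_mul_dotProduct_self _ _
      _ ≤ (sigmaMax A ^ 2 * t) * (w ⬝ᵥ w) := by
        gcongr
        · exact dotProduct_self_nonneg w
        · exact mulVec_dotProduct_mulVec_le_sigmaMax_sq_mul A _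
      _ = t * (sigmaMax A ^ 2 * (w ⬝ᵥ w)) := by ring
  rcases (dotProduct_self_nonneg _ : 0 ≤ t).eq_or_lt with ht0 | ht0
  · exact ht0.symm.trans_le (mul_nonneg (sq_nonneg _) (dotProduct_self_nonneg w))
  · exact le_of_mul_le_mul_left hcs ht0

theorem Matrix.eigenvalues_conjTranspose_mul_self_pos (h : A.rank = n) (j : Fin n) :
    0 < (isHermitian_conjTranspose_mul_self A).eigenvalues j := by
  refine (eigenvalues_conjTranspose_mul_self_nonneg A j).lt_of_ne' fun hj => ?_
  have hcard := (isHermitian_conjTranspose_mul_self A).rank_eq_card_non_zero_eigs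
  rw [rank_conjTranspose_mul_self, h] at hcard
  exact (Fintype.card_subtype_lt (p := fun j => _ ≠ 0) (not_not.mpr hj)).ne' (by simpa using hcard)

theorem sigmaMin_pos (hn : 0 < n) (h : A.rank = n) : 0 < sigmaMin A := by
  have : Nonempty (Fin n) := Fin.pos_iff_nonempty.mp hn
  obtain ⟨j, hj⟩ := Finite.exists_min (singVals A)
  exact (Real.sqrt_pos.mpr (eigenvalues_conjTranspose_mul_self_pos A h j)).trans_le (le_ciInf hj)

theorem sigmaMin_le_sigmaMax (hn : 0 < n) : sigmaMin A ≤ sigmaMax A :=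
  have : Nonempty (Fin n) := Fin.pos_iff_nonempty.mp hn
  ciInf_le_ciSup (Finite.bddBelow_range _) (Finite.bddAbove_range _)

theorem one_le_kappa (hn : 0 < n) (h : A.rank = n) : 1 ≤ kappa A :=
  (one_le_div (sigmaMin_pos A hn h)).mpr (sigmaMin_le_sigmaMax A hn)

theorem dotProduct_self_mul_transpose_mulVec_le (hn : 0 < n) (h : A.rank = n) {κ : ℝ}
    (hκ : kappa A ≤ κ) (v : Fin n → ℝ) (w : ι → ℝ) :
    (v ⬝ᵥ v) * (Aᵀ *ᵥ w ⬝ᵥ Aᵀ *ᵥ w) ≤ κ ^ 2 * (A *ᵥ v ⬝ᵥ A *ᵥ v) * (w ⬝ᵥ w) := by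
  have hmax : sigmaMax A ≤ κ * sigmaMin A := (div_le_iff₀ (sigmaMin_pos A hn h)).mp hκ
  have hv := dotProduct_self_nonneg v
  have hw := dotProduct_self_nonneg w
  calc (v ⬝ᵥ v) * (Aᵀ *ᵥ w ⬝ᵥ Aᵀ *ᵥ w) ≤ (v ⬝ᵥ v) * (sigmaMax A ^ 2 * (w ⬝ᵥ w)) := by
        gcongr; exact transpose_mulVec_dotProduct_mulVec_le_sigmaMax_sq_mul A w
    _ ≤ (v ⬝ᵥ v) * ((κ * sigmaMin A) ^ 2 * (w ⬝ᵥ w)) := by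
        gcongr
        exact (sigmaMin_nonneg A).trans (sigmaMin_le_sigmaMax A hn)
    _ = κ ^ 2 * (sigmaMin A ^ 2 * (v ⬝ᵥ v)) * (w ⬝ᵥ w) := by ring
    _ ≤ κ ^ 2 * (A *ᵥ v ⬝ᵥ A *ᵥ v) * (w ⬝ᵥ w) := by
        gcongr; exact sigmaMin_sq_mul_le_mulVec_dotProduct_mulVec A v

end SingularValues

section TangentialCone

variable {ι : Type*} [Fintype ι] {f b : ι → ℝ} {η : ℝ}

theorem abs_dotProduct_sub_le (h : ∀ i, |f i - b i| ≤ η * |f i|) :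
    |f ⬝ᵥ (b - f)| ≤ η * (f ⬝ᵥ f) := by
  calc |f ⬝ᵥ (b - f)| ≤ ∑ i, |f i * (b i - f i)| := Finset.abs_sum_le_sum_abs _ _
    _ ≤ ∑ i, η * (f i * f i) := by
        gcongr with i
        rw [abs_mul, abs_sub_comm, ← abs_mul_abs_self (f i), mul_left_comm]
        exact mul_le_mul_of_nonneg_left (h i) (abs_nonneg _)
    _ = η * (f ⬝ᵥ f) := by rw [dotProduct, Finset.mul_sum]

theorem sub_dotProduct_sub_le (h : ∀ i, |f i - b i| ≤ η * |f i|) :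
    (b - f) ⬝ᵥ (b - f) ≤ η ^ 2 * (f ⬝ᵥ f) := by
  rw [dotProduct, dotProduct, Finset.mul_sum]
  refine Finset.sum_le_sum fun i _ => ?_
  calc (b - f) i * (b - f) i = |f i - b i| ^ 2 := by rw [sq_abs, Pi.sub_apply]; ring
    _ ≤ (η * |f i|) ^ 2 := pow_le_pow_left₀ (abs_nonneg _) (h i) 2
    _ = η ^ 2 * (f i * f i) := by rw [mul_pow, sq_abs]; ring

end TangentialCone

theorem two_mul_sub_sq_mul_le {η δ S E B : ℝ} (hη : 0 ≤ η) (hδ0 : 0 ≤ δ)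
    (hδ2 : δ ≤ 2 * (1 - η)) (hE : |E| ≤ η * S) (hB : B ≤ (1 + η ^ 2) * S + 2 * E) :
    (2 * (1 - η) * δ - δ ^ 2) * B ≤ (1 + η ^ 2) * (2 * δ * (S + E) - δ ^ 2 * S) := by
  have hnum : 0 ≤ 2 * (1 - η) * δ - δ ^ 2 := by nlinarith
  -- After expanding, the claim is `0 ≤ 2δ (η (1 + η²) S + (η² + 2η - 1 + δ) E)`.
  have ha : |η ^ 2 + 2 * η - 1 + δ| ≤ 1 + η ^ 2 := abs_le.mpr ⟨by nlinarith, by linarith⟩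
  have hprod : -((1 + η ^ 2) * (η * S)) ≤ (η ^ 2 + 2 * η - 1 + δ) * E := by
    calc -((1 + η ^ 2) * (η * S)) ≤ -|(η ^ 2 + 2 * η - 1 + δ) * E| := by
          rw [abs_mul, neg_le_neg_iff]
          exact mul_le_mul ha hE (abs_nonneg _) (by positivity)
      _ ≤ _ := neg_abs_le _
  calc (2 * (1 - η) * δ - δ ^ 2) * B
      ≤ (2 * (1 - η) * δ - δ ^ 2) * ((1 + η ^ 2) * S + 2 * E) := by gcongr
    _ ≤ (1 + η ^ 2) * (2 * δ * (S + E) - δ ^ 2 * S) := by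
        nlinarith [mul_le_mul_of_nonneg_left hprod hδ0]

theorem norm_sub_smul_sq_le_of_mul_le {V : Type*} [NormedAddCommGroup V] [InnerProductSpace ℝ V]
    {e g : V} (hg : g ≠ 0) {δ S ρ : ℝ}
    (h : ρ * ‖e‖ ^ 2 * ‖g‖ ^ 2 ≤ S * (2 * δ * ⟪e, g⟫ - δ ^ 2 * S)) :
    ‖e - (δ * S / ‖g‖ ^ 2) • g‖ ^ 2 ≤ (1 - ρ) * ‖e‖ ^ 2 := by
  have hG : 0 < ‖g‖ ^ 2 := by positivity
  have hexp : ‖e - (δ * S / ‖g‖ ^ 2) • g‖ ^ 2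
      = ‖e‖ ^ 2 - S * (2 * δ * ⟪e, g⟫ - δ ^ 2 * S) / ‖g‖ ^ 2 := by
    rw [norm_sub_sq_real, inner_smul_right, norm_smul, mul_pow, Real.norm_eq_abs, sq_abs]
    field_simp
    ring
  rw [hexp, sub_mul, one_mul, sub_le_sub_iff_left, le_div_iff₀ hG]
  exact h

noncomputable def contractionRate (η δ κ : ℝ) : ℝ :=
  (2 * (1 - η) * δ - δ ^ 2) / ((1 + η ^ 2) * κ ^ 2)

theorem contractionRate_pos {η δ κ : ℝ} (hδ0 : 0 < δ) (hδ2 : δ < 2 * (1 - η)) (hκ : κ ≠ 0) :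
    0 < contractionRate η δ κ := by
  unfold contractionRate
  have : 0 < 2 * (1 - η) * δ - δ ^ 2 := by nlinarith
  positivity

theorem contractionRate_nonneg {η δ κ : ℝ} (hδ0 : 0 ≤ δ) (hδ2 : δ ≤ 2 * (1 - η)) :
    0 ≤ contractionRate η δ κ := by
  unfold contractionRate
  have : 0 ≤ 2 * (1 - η) * δ - δ ^ 2 := by nlinarith
  positivity

theorem contractionRate_le_one {η δ κ : ℝ} (hη : 0 ≤ η) (hκ : 1 ≤ κ) :
    contractionRate η δ κ ≤ 1 := by
  unfold contractionRate
  rw [div_le_one (by positivity)]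
  nlinarith [sq_nonneg (δ - (1 - η)), one_le_pow₀ (n := 2) hκ]

theorem norm_sub_adaptive_step_sq_le {ι : Type*} [Fintype ι] {n : ℕ} (J : Matrix ι (Fin n) ℝ)
    (hJ : J.rank = n) (f : ι → ℝ) (e g : EuclideanSpace ℝ (Fin n)) (hgJ : g.ofLp = Jᵀ *ᵥ f)
    (hg : g ≠ 0) {η δ κ : ℝ} (hη : 0 ≤ η) (hδ0 : 0 ≤ δ) (hδ2 : δ ≤ 2 * (1 - η))
    (hcone : ∀ i, |f i - (J *ᵥ e.ofLp) i| ≤ η * |f i|) (hκ : kappa J ≤ κ) :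
    ‖e - (δ * (f ⬝ᵥ f) / ‖g‖ ^ 2) • g‖ ^ 2 ≤ (1 - contractionRate η δ κ) * ‖e‖ ^ 2 := by
  set b := J *ᵥ e.ofLp
  set S := f ⬝ᵥ f
  set E := f ⬝ᵥ (b - f)
  have hn : 0 < n := EuclideanSpace.pos_of_ne_zero hg
  have hG : ‖g‖ ^ 2 = Jᵀ *ᵥ f ⬝ᵥ Jᵀ *ᵥ f := by
    rw [← real_inner_self_eq_norm_sq, EuclideanSpace.inner_eq_star_dotProduct, hgJ, star_trivial]
  have hD : ‖e‖ ^ 2 = e.ofLp ⬝ᵥ e.ofLp := by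
    rw [← real_inner_self_eq_norm_sq, EuclideanSpace.inner_eq_star_dotProduct, star_trivial]
  have hP : ⟪e, g⟫ = S + E := by
    rw [EuclideanSpace.inner_eq_star_dotProduct, hgJ, star_trivial, mulVec_transpose,
      ← dotProduct_mulVec]
    simp only [S, E, b, dotProduct_sub]
    ring
  have hB : b ⬝ᵥ b ≤ (1 + η ^ 2) * S + 2 * E := by
    have hsplit : b ⬝ᵥ b = S + 2 * E + (b - f) ⬝ᵥ (b - f) := by
      simp only [S, E, dotProduct_sub, sub_dotProduct, dotProduct_comm b f]
      ring
    linarith [sub_dotProduct_sub_le hcone]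
  apply norm_sub_smul_sq_le_of_mul_le hg
  calc contractionRate η δ κ * ‖e‖ ^ 2 * ‖g‖ ^ 2
      ≤ contractionRate η δ κ * (κ ^ 2 * (b ⬝ᵥ b) * S) := by
        rw [mul_assoc, hG, hD]
        exact mul_le_mul_of_nonneg_left (dotProduct_self_mul_transpose_mulVec_le J hn hJ hκ _ _)
          (contractionRate_nonneg hδ0 hδ2)
    _ = (2 * (1 - η) * δ - δ ^ 2) * (b ⬝ᵥ b) / (1 + η ^ 2) * S := by
        have hκ0 : κ ≠ 0 := (one_pos.trans_le ((one_le_kappa J hn hJ).trans hκ)).ne'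
        unfold contractionRate
        field_simp
    _ ≤ (2 * δ * (S + E) - δ ^ 2 * S) * S := by
        gcongr
        · exact dotProduct_self_nonneg f
        · rw [div_le_iff₀' (by positivity)]
          exact two_mul_sub_sq_mul_le hη hδ0 hδ2 (abs_dotProduct_sub_le hcone) hB
    _ = S * (2 * δ * ⟪e, g⟫ - δ ^ 2 * S) := by rw [hP]; ring

theorem tendsto_of_norm_sub_sq_le_geom {E : Type*} [SeminormedAddCommGroup E] {x : ℕ → E} {a : E}
    {q C : ℝ} (hq0 : 0 ≤ q) (hq1 : q < 1) (h : ∀ k, ‖x k - a‖ ^ 2 ≤ q ^ k * C) :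
    Filter.Tendsto x Filter.atTop (nhds a) := by
  have hC : Filter.Tendsto (fun k => √(q ^ k * C)) Filter.atTop (nhds 0) := by
    simpa using ((tendsto_pow_atTop_nhds_zero_of_lt_one hq0 hq1).mul_const C).sqrt
  refine tendsto_iff_norm_sub_tendsto_zero.mpr (squeeze_zero (fun k => norm_nonneg _) ?_ hC)
  exact fun k => Real.le_sqrt_of_sq_le (h k)

theorem abnk_adaptive_stepsize_convergence_general
    {n m : ℕ}
    (F : Fin m → EuclideanSpace ℝ (Fin n) → ℝ)
    (grad : Fin m → EuclideanSpace ℝ (Fin n) → EuclideanSpace ℝ (Fin n))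
    (η : ℝ) (hη0 : 0 ≤ η)
    -- local tangential cone condition with constant η
    (hltcc : ∀ i (x₁ x₂ : EuclideanSpace ℝ (Fin n)),
      |F i x₁ - F i x₂ - ∑ j, grad i x₁ j * (x₁ j - x₂ j)| ≤ η * |F i x₁ - F i x₂|)
    (xstar : EuclideanSpace ℝ (Fin n)) (hstar : ∀ i, F i xstar = 0)
    (δ : ℝ) (hδ0 : 0 < δ) (hδ2 : δ < 2 * (1 - η))
    (x : ℕ → EuclideanSpace ℝ (Fin n))
    (I : ℕ → Finset (Fin m))
    -- the row-submatrices F'_{I_k}(x_k) of the Jacobian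
    (J : ∀ k, Matrix {i // i ∈ I k} (Fin n) ℝ)
    (hJdef : ∀ k, J k = Matrix.of fun (i : {i // i ∈ I k}) (j : Fin n) => grad i.1 (x k) j)
    -- each F'_{I_k}(x_k) has full column rank
    (hrank : ∀ k, (J k).rank = n)
    -- g_k = (F'_{I_k}(x_k))ᵀ F_{I_k}(x_k)
    (g : ℕ → EuclideanSpace ℝ (Fin n))
    (hgdef : ∀ k, g k = ∑ i ∈ I k, F i (x k) • grad i (x k))
    (hg : ∀ k, g k ≠ 0)
    -- x_{k+1} = x_k − δ (‖F_{I_k}(x_k)‖₂² / ‖g_k‖₂²) g_k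
    (hupd : ∀ k, x (k + 1)
      = x k - (δ * (∑ i ∈ I k, (F i (x k)) ^ 2) / ‖g k‖ ^ 2) • g k)
    (κbar : ℝ)
    (hκ : ∀ k, kappa (J k) ≤ κbar) :
    (∀ k, ‖x k - xstar‖ ^ 2
        ≤ (1 - (2 * (1 - η) * δ - δ ^ 2) / ((1 + η ^ 2) * κbar ^ 2)) ^ k
            * ‖x 0 - xstar‖ ^ 2)
      ∧ Filter.Tendsto x Filter.atTop (nhds xstar) := by
  set ρ := contractionRate η δ κbar
  have hstep : ∀ k, ‖x (k + 1) - xstar‖ ^ 2 ≤ (1 - ρ) * ‖x k - xstar‖ ^ 2 := by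
    intro k
    set f : {i // i ∈ I k} → ℝ := fun i => F i (x k)
    have hgJ : (g k).ofLp = (J k)ᵀ *ᵥ f := by
      ext j
      simp [hgdef, hJdef, f, mulVec, dotProduct, mul_comm,
        Finset.sum_attach (I k) fun i => F i (x k) * grad i (x k) j]
    have hcone : ∀ i, |f i - (J k *ᵥ (x k - xstar).ofLp) i| ≤ η * |f i| := by
      intro i
      simpa [f, hJdef, hstar, mulVec, dotProduct] using hltcc i (x k) xstar
    have hS : ∑ i ∈ I k, F i (x k) ^ 2 = f ⬝ᵥ f := by
      simp only [dotProduct, f, ← sq]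
      exact (Finset.sum_coe_sort (I k) _).symm
    rw [hupd k, sub_right_comm, hS]
    exact norm_sub_adaptive_step_sq_le (J k) (hrank k) f _ _ hgJ (hg k) hη0 hδ0.le hδ2.le hcone
      (hκ k)
  have hn : 0 < n := EuclideanSpace.pos_of_ne_zero (hg 0)
  have hκ1 : 1 ≤ κbar := (one_le_kappa (J 0) hn (hrank 0)).trans (hκ 0)
  have hρ0 : 0 < ρ := contractionRate_pos hδ0 hδ2 (by positivity)
  have hρ1 : ρ ≤ 1 := contractionRate_le_one hη0 hκ1
  have hbound : ∀ k, ‖x k - xstar‖ ^ 2 ≤ (1 - ρ) ^ k * ‖x 0 - xstar‖ ^ 2 := fun k =>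
    le_geom (u := fun k => ‖x k - xstar‖ ^ 2) (sub_nonneg.mpr hρ1) k fun k _ => hstep k
  exact ⟨hbound, tendsto_of_norm_sub_sq_le_geom (sub_nonneg.mpr hρ1) (by linarith) hbound⟩

/-- the averaging block nonlinear Kaczmarz method with adaptive stepsize,
`δ ∈ (0, 2(1−η))`, converges: if `κ(F'_{I_k}(x_k)) ≤ κ̄` for all `k`, then
`‖x_k − x⋆‖₂² ≤ (1 − (2(1−η)δ − δ²)/((1+η²) κ̄²))^k ‖x₀ − x⋆‖₂²` and `x_k → x⋆`. -/
theorem abnk_adaptive_stepsize_convergence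
    {n m : ℕ}
    (F : Fin m → EuclideanSpace ℝ (Fin n) → ℝ)
    (grad : Fin m → EuclideanSpace ℝ (Fin n) → EuclideanSpace ℝ (Fin n))
    (η : ℝ) (hη0 : 0 ≤ η) (hη : η < 1 / 2)
    -- F is differentiable with Jacobian whose i-th row is ∇F_i
    (hdiff : ∀ i x, HasGradientAt (F i) (grad i x) x)
    -- local tangential cone condition with constant η
    (hltcc : ∀ i (x₁ x₂ : EuclideanSpace ℝ (Fin n)),
      |F i x₁ - F i x₂ - ∑ j, grad i x₁ j * (x₁ j - x₂ j)| ≤ η * |F i x₁ - F i x₂|)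
    (xstar : EuclideanSpace ℝ (Fin n)) (hstar : ∀ i, F i xstar = 0)
    (δ : ℝ) (hδ0 : 0 < δ) (hδ2 : δ < 2 * (1 - η))
    (x : ℕ → EuclideanSpace ℝ (Fin n))
    (I : ℕ → Finset (Fin m)) (hI : ∀ k, (I k).Nonempty)
    -- the row-submatrices F'_{I_k}(x_k) of the Jacobian
    (J : ∀ k, Matrix {i // i ∈ I k} (Fin n) ℝ)
    (hJdef : ∀ k, J k = Matrix.of fun (i : {i // i ∈ I k}) (j : Fin n) => grad i.1 (x k) j)
    -- each F'_{I_k}(x_k) has full column rank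
    (hrank : ∀ k, (J k).rank = n)
    -- g_k = (F'_{I_k}(x_k))ᵀ F_{I_k}(x_k)
    (g : ℕ → EuclideanSpace ℝ (Fin n))
    (hgdef : ∀ k, g k = ∑ i ∈ I k, F i (x k) • grad i (x k))
    (hg : ∀ k, g k ≠ 0)
    -- x_{k+1} = x_k − δ (‖F_{I_k}(x_k)‖₂² / ‖g_k‖₂²) g_k
    (hupd : ∀ k, x (k + 1)
      = x k - (δ * (∑ i ∈ I k, (F i (x k)) ^ 2) / ‖g k‖ ^ 2) • g k)
    (κbar : ℝ) (hκ0 : 0 < κbar)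
    (hκ : ∀ k, kappa (J k) ≤ κbar) :
    (∀ k, ‖x k - xstar‖ ^ 2
        ≤ (1 - (2 * (1 - η) * δ - δ ^ 2) / ((1 + η ^ 2) * κbar ^ 2)) ^ k
            * ‖x 0 - xstar‖ ^ 2)
      ∧ Filter.Tendsto x Filter.atTop (nhds xstar) :=
  abnk_adaptive_stepsize_convergence_general F grad η hη0 hltcc xstar hstar δ hδ0 hδ2 x I J hJdef
    hrank g hgdef hg hupd κbar hκ
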